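/- arXiv:2305.06979 — 5 statements merged into one kernel-verified Lean document; each statement's English description precedes it below -/
import Mathlib

section
/- Composing a combinatorial monitoring circuit with a monitored circuit does not change the monitored circuit's state evolution: if M's write registers are disjoint from C's registers (M never writes any register that C reads or writes), then for every valuation μ and every cycle i, the restriction of the composed circuit's state after i steps to C's registers equals C's state after i steps from μ restricted to C's registers. -/
open Set

theorem Function.iterate_rel {α : Type*} {r : α → α → Prop} {f g : α → α}
    (h : ∀ x y, r x y → r (f x) (g y)) {x y : α} (hxy : r x y) (n : ℕ) :
    r (f^[n] x) (g^[n] y) := by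
  induction n with
  | zero => exact hxy
  | succ n ih =>
    rw [Function.iterate_succ_apply', Function.iterate_succ_apply']
    exact h _ _ ih

theorem stmt2_general {R Val : Type}
    (CW MW Cregs : Set R)            -- write sets of C and M; registers C reads or writes
    (hdisj : ∀ r ∈ MW, r ∉ Cregs)
    (CA : R → (R → Val) → Val)    -- right-hand-side evaluation functions
    -- C's expressions depend only on C's registers:
    (hdep : ∀ r ∈ CW, ∀ μ μ' : R → Val, (∀ v ∈ Cregs, μ v = μ' v) → CA r μ = CA r μ')
    (stepC stepComp : (R → Val) → (R → Val))
    (hC1 : ∀ μ r, r ∈ CW → stepC μ r = CA r μ)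
    (hC2 : ∀ μ r, r ∉ CW → stepC μ r = μ r)
    (hComp2 : ∀ μ r, r ∉ MW → r ∈ CW → stepComp μ r = CA r μ)
    (hComp3 : ∀ μ r, r ∉ MW → r ∉ CW → stepComp μ r = μ r)
    (μ : R → Val) (i : ℕ) :
    ∀ r ∈ Cregs, (stepComp^[i] μ) r = (stepC^[i] μ) r := by
  have hstep : ∀ μ ν, EqOn μ ν Cregs → EqOn (stepComp μ) (stepC ν) Cregs := by
    intro μ ν hμν r hr
    have hrM : r ∉ MW := fun h => hdisj r h hr
    by_cases hrC : r ∈ CW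
    · rw [hComp2 μ r hrM hrC, hC1 ν r hrC]
      exact hdep r hrC μ ν fun v hv => hμν hv
    · rw [hComp3 μ r hrM hrC, hC2 ν r hrC]
      exact hμν hr
  exact Function.iterate_rel hstep (eqOn_refl μ Cregs) i

/-- Composing a combinatorial monitoring circuit `M` with a monitored circuit `C`
does not change the monitored circuit's state evolution on `C`'s registers,
provided `M` writes no register that `C` reads or writes. -/
theorem stmt2 {R Val : Type}
    (CW MW Cregs : Set R)            -- write sets of C and M; registers C reads or writes
    (hCW : CW ⊆ Cregs)
    (hdisj : ∀ r ∈ MW, r ∉ Cregs)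
    (CA MA : R → (R → Val) → Val)    -- right-hand-side evaluation functions
    -- C's expressions depend only on C's registers:
    (hdep : ∀ r ∈ CW, ∀ μ μ' : R → Val, (∀ v ∈ Cregs, μ v = μ' v) → CA r μ = CA r μ')
    (stepC stepComp : (R → Val) → (R → Val))
    (hC1 : ∀ μ r, r ∈ CW → stepC μ r = CA r μ)
    (hC2 : ∀ μ r, r ∉ CW → stepC μ r = μ r)
    (hComp1 : ∀ μ r, r ∈ MW → stepComp μ r = MA r μ)
    (hComp2 : ∀ μ r, r ∉ MW → r ∈ CW → stepComp μ r = CA r μ)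
    (hComp3 : ∀ μ r, r ∉ MW → r ∉ CW → stepComp μ r = μ r)
    (μ : R → Val) (i : ℕ) :
    ∀ r ∈ Cregs, (stepComp^[i] μ) r = (stepC^[i] μ) r :=
  stmt2_general CW MW Cregs hdisj CA hdep stepC stepComp hC1 hC2 hComp2 hComp3 μ i
end

section
/- Decoupling theorem, forward direction: assume ISA compliance, i.e., for every initial implementation state μ, the φ-filtered trace of the implementation agrees on architectural registers with the trace of the architecture started from the architectural projection of μ, and architectural registers only change at steps where φ holds. Assume microarchitectural contract satisfaction: for all initial states μ, μ' agreeing on microarchitectural registers, equality of φ-filtered leakage-monitor traces on the implementation implies equality of attacker traces on the implementation. Then contract satisfaction holds: for all initial states μ, μ' agreeing on microarchitectural registers, equality of leakage-monitor traces on the architecture implies equality of attacker traces on the implementation. -/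
theorem stmt3_general {A M Obs Obs' : Type}
    (arch : A → A) (IMPL : A × M → A × M)
    (φ : A × M → Prop) (L : A → Obs) (ATK : A × M → Obs')
    (Init : Set (A × M))
    -- ISA compliance (1): witnessed architectural changes agree with arch
    (compl1 : ∀ μ ∈ Init, ∀ k : ℕ,
      (IMPL^[Nat.nth (fun n => φ (IMPL^[n] μ)) k] μ).1 = arch^[k] μ.1)
    -- microarchitectural contract satisfaction
    (hμsat : ∀ μ ∈ Init, ∀ μ' ∈ Init, μ.2 = μ'.2 →
      (fun k => L ((IMPL^[Nat.nth (fun n => φ (IMPL^[n] μ)) k] μ).1)) =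
        (fun k => L ((IMPL^[Nat.nth (fun n => φ (IMPL^[n] μ')) k] μ').1)) →
      (fun n => ATK (IMPL^[n] μ)) = (fun n => ATK (IMPL^[n] μ'))) :
    -- contract satisfaction
    ∀ μ ∈ Init, ∀ μ' ∈ Init, μ.2 = μ'.2 →
      (fun n => L (arch^[n] μ.1)) = (fun n => L (arch^[n] μ'.1)) →
      (fun n => ATK (IMPL^[n] μ)) = (fun n => ATK (IMPL^[n] μ')) := by
  intro μ hμ μ' hμ' hmicro hL
  refine hμsat μ hμ μ' hμ' hmicro ?_
  simpa only [compl1 μ hμ, compl1 μ' hμ'] using hL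

/-- Decoupling theorem, forward direction. States are pairs of an architectural
valuation (in `A`) and a microarchitectural valuation (in `M`); the architectural
projection is `Prod.fst`. Filtered traces are obtained via `Nat.nth` over the
indices at which the retirement predicate `φ` holds. ISA compliance plus
microarchitectural contract satisfaction imply contract satisfaction. -/
theorem stmt3 {A M Obs Obs' : Type}
    (arch : A → A) (IMPL : A × M → A × M)
    (φ : A × M → Prop) (L : A → Obs) (ATK : A × M → Obs')
    (Init : Set (A × M))
    -- ISA compliance (1): witnessed architectural changes agree with arch
    (compl1 : ∀ μ ∈ Init, ∀ k : ℕ,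
      (IMPL^[Nat.nth (fun n => φ (IMPL^[n] μ)) k] μ).1 = arch^[k] μ.1)
    -- ISA compliance (2): no architectural changes beyond those witnessed
    (compl2 : ∀ μ ∈ Init, ∀ i : ℕ, 1 ≤ i → ¬ φ (IMPL^[i] μ) →
      (IMPL^[i] μ).1 = (IMPL^[i - 1] μ).1)
    -- microarchitectural contract satisfaction
    (hμsat : ∀ μ ∈ Init, ∀ μ' ∈ Init, μ.2 = μ'.2 →
      (fun k => L ((IMPL^[Nat.nth (fun n => φ (IMPL^[n] μ)) k] μ).1)) =
        (fun k => L ((IMPL^[Nat.nth (fun n => φ (IMPL^[n] μ')) k] μ').1)) →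
      (fun n => ATK (IMPL^[n] μ)) = (fun n => ATK (IMPL^[n] μ'))) :
    -- contract satisfaction
    ∀ μ ∈ Init, ∀ μ' ∈ Init, μ.2 = μ'.2 →
      (fun n => L (arch^[n] μ.1)) = (fun n => L (arch^[n] μ'.1)) →
      (fun n => ATK (IMPL^[n] μ)) = (fun n => ATK (IMPL^[n] μ')) :=
  stmt3_general arch IMPL φ L ATK Init compl1 hμsat
end

section
/- Decoupling theorem, backward direction: under the same ISA-compliance assumption, contract satisfaction (equality of architecture leakage traces implies equality of implementation attacker traces, for initial states agreeing on microarchitectural registers) implies microarchitectural contract satisfaction (equality of φ-filtered implementation leakage traces implies equality of implementation attacker traces). -/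
theorem stmt4_general {A M Obs Obs' : Type}
    (arch : A → A) (IMPL : A × M → A × M)
    (φ : A × M → Prop) (L : A → Obs) (ATK : A × M → Obs')
    (Init : Set (A × M))
    -- ISA compliance (1): witnessed architectural changes agree with arch
    (compl1 : ∀ μ ∈ Init, ∀ k : ℕ,
      (IMPL^[Nat.nth (fun n => φ (IMPL^[n] μ)) k] μ).1 = arch^[k] μ.1)
    -- contract satisfaction
    (hsat : ∀ μ ∈ Init, ∀ μ' ∈ Init, μ.2 = μ'.2 →
      (fun n => L (arch^[n] μ.1)) = (fun n => L (arch^[n] μ'.1)) →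
      (fun n => ATK (IMPL^[n] μ)) = (fun n => ATK (IMPL^[n] μ'))) :
    -- microarchitectural contract satisfaction
    ∀ μ ∈ Init, ∀ μ' ∈ Init, μ.2 = μ'.2 →
      (fun k => L ((IMPL^[Nat.nth (fun n => φ (IMPL^[n] μ)) k] μ).1)) =
        (fun k => L ((IMPL^[Nat.nth (fun n => φ (IMPL^[n] μ')) k] μ').1)) →
      (fun n => ATK (IMPL^[n] μ)) = (fun n => ATK (IMPL^[n] μ')) := by
  intro μ hμ μ' hμ' hM hL
  refine hsat μ hμ μ' hμ' hM ?_
  simpa only [compl1 μ hμ, compl1 μ' hμ'] using hL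

/-- Decoupling theorem, backward direction: under ISA compliance, contract
satisfaction implies microarchitectural contract satisfaction. -/
theorem stmt4 {A M Obs Obs' : Type}
    (arch : A → A) (IMPL : A × M → A × M)
    (φ : A × M → Prop) (L : A → Obs) (ATK : A × M → Obs')
    (Init : Set (A × M))
    -- ISA compliance (1): witnessed architectural changes agree with arch
    (compl1 : ∀ μ ∈ Init, ∀ k : ℕ,
      (IMPL^[Nat.nth (fun n => φ (IMPL^[n] μ)) k] μ).1 = arch^[k] μ.1)
    -- ISA compliance (2): no architectural changes beyond those witnessed
    (compl2 : ∀ μ ∈ Init, ∀ i : ℕ, 1 ≤ i → ¬ φ (IMPL^[i] μ) →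
      (IMPL^[i] μ).1 = (IMPL^[i - 1] μ).1)
    -- contract satisfaction
    (hsat : ∀ μ ∈ Init, ∀ μ' ∈ Init, μ.2 = μ'.2 →
      (fun n => L (arch^[n] μ.1)) = (fun n => L (arch^[n] μ'.1)) →
      (fun n => ATK (IMPL^[n] μ)) = (fun n => ATK (IMPL^[n] μ'))) :
    -- microarchitectural contract satisfaction
    ∀ μ ∈ Init, ∀ μ' ∈ Init, μ.2 = μ'.2 →
      (fun k => L ((IMPL^[Nat.nth (fun n => φ (IMPL^[n] μ)) k] μ).1)) =
        (fun k => L ((IMPL^[Nat.nth (fun n => φ (IMPL^[n] μ')) k] μ').1)) →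
      (fun n => ATK (IMPL^[n] μ)) = (fun n => ATK (IMPL^[n] μ')) :=
  stmt4_general arch IMPL φ L ATK Init compl1 hsat
end

section
/- Soundness of the verification algorithm: let C be a deterministic transition system on pairs of implementation states (a product system), with initial condition Init (both components initial and agreeing on microarchitectural registers), assumption Φ_ctr (equality of filtered contract observations), and a set LI of relational invariants satisfying the Base and Inductive conditions with lookahead b. If additionally every state satisfying all invariants in LI satisfies attacker-observation equality ψ_ATK, then microarchitectural contract satisfaction holds: for all pairs of initial states μ, μ' agreeing on microarchitectural registers whose runs satisfy Φ_ctr at every step, the attacker observations agree at every step. -/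
theorem Function.iterate_invariant_of_lookahead {α : Type*} {f : α → α} {Φ I : α → Prop} {b : ℕ}
    (ind : ∀ p, I p → (∀ j < b, Φ (f^[j] p)) → I (f p)) {x : α} (hx : I x)
    (hΦ : ∀ n, Φ (f^[n] x)) : ∀ n, I (f^[n] x)
  | 0 => hx
  | n + 1 => by
    rw [Function.iterate_succ_apply']
    refine ind _ (iterate_invariant_of_lookahead ind hx hΦ n) fun j _ => ?_
    rw [← Function.iterate_add_apply]
    exact hΦ (j + n)

theorem stmt7_general {S Obs : Type} (IMPL : S → S) (ATK : S → Obs)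
    (Init0 : S → Prop) (μeq : S → S → Prop)
    (Φctr : S × S → Prop) (b : ℕ)
    (LI : Set (S × S → Prop))
    (C : S × S → S × S) (hC : ∀ p, C p = (IMPL p.1, IMPL p.2))
    (Init : S × S → Prop)
    (hInit : ∀ p, Init p ↔ Init0 p.1 ∧ Init0 p.2 ∧ μeq p.1 p.2)
    -- Base condition
    (base : ∀ p, Init p → (∀ j < b, Φctr (C^[j] p)) → ∀ ψ ∈ LI, ψ p)
    -- Inductive condition
    (ind : ∀ p, (∀ ψ ∈ LI, ψ p) → (∀ j < b, Φctr (C^[j] p)) → ∀ ψ ∈ LI, ψ (C p))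
    -- the learned invariants imply attacker-observation equality
    (hatk : ∀ p : S × S, (∀ ψ ∈ LI, ψ p) → ATK p.1 = ATK p.2) :
    ∀ μ μ' : S, Init0 μ → Init0 μ' → μeq μ μ' →
      (∀ n, Φctr (C^[n] (μ, μ'))) →
      ∀ n, ATK (IMPL^[n] μ) = ATK (IMPL^[n] μ') := by
  intro μ μ' hμ hμ' hμeq hΦ n
  have hC_eq : C = Prod.map IMPL IMPL := funext hC
  have hLI_init : ∀ ψ ∈ LI, ψ (μ, μ') :=
    base _ ((hInit _).2 ⟨hμ, hμ', hμeq⟩) fun j _ => hΦ j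
  have hLI_run := Function.iterate_invariant_of_lookahead ind hLI_init hΦ n
  simpa only [hC_eq, Prod.map_iterate, Prod.map_apply] using hatk _ hLI_run

/-- Soundness of the verification algorithm: relational invariants learned on
the (non-stuttering) product system that imply attacker-observation equality
establish microarchitectural contract satisfaction. -/
theorem stmt7 {S Obs : Type} (IMPL : S → S) (ATK : S → Obs)
    (Init0 : S → Prop) (μeq : S → S → Prop)
    (Φctr : S × S → Prop) (b : ℕ) (hb : 1 ≤ b)
    (LI : Set (S × S → Prop))
    (C : S × S → S × S) (hC : ∀ p, C p = (IMPL p.1, IMPL p.2))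
    (Init : S × S → Prop)
    (hInit : ∀ p, Init p ↔ Init0 p.1 ∧ Init0 p.2 ∧ μeq p.1 p.2)
    -- Base condition
    (base : ∀ p, Init p → (∀ j < b, Φctr (C^[j] p)) → ∀ ψ ∈ LI, ψ p)
    -- Inductive condition
    (ind : ∀ p, (∀ ψ ∈ LI, ψ p) → (∀ j < b, Φctr (C^[j] p)) → ∀ ψ ∈ LI, ψ (C p))
    -- the learned invariants imply attacker-observation equality
    (hatk : ∀ p : S × S, (∀ ψ ∈ LI, ψ p) → ATK p.1 = ATK p.2) :
    ∀ μ μ' : S, Init0 μ → Init0 μ' → μeq μ μ' →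
      (∀ n, Φctr (C^[n] (μ, μ'))) →
      ∀ n, ATK (IMPL^[n] μ) = ATK (IMPL^[n] μ') :=
  stmt7_general IMPL ATK Init0 μeq Φctr b LI C hC Init hInit base ind hatk
end

section
/- The two-phase implementation sIMP correctly implements sISA with retirement predicate ret = 1: for every memory m and initial state (pc=0, reg=0, st=0, ret=1), the subsequence of (pc, reg) values of sIMP's run at steps where ret = 1 equals sISA's run of (pc, reg) values, and (pc, reg) is unchanged at any step where ret = 0. -/
/-!
A retired state of sIMP (`st = 0`, `ret = 1`) executes one sISA instruction in one step when
the instruction is `0` and in two steps otherwise, the first of which only latches `m pc + reg`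
into `res` and does not retire. So the run from a retired state passes through retired states
exactly at the partial sums of these latencies, where its `(pc, reg)` agrees with the sISA run,
and the number of retired states before the `k`-th such time is `k`.
-/

/-- State of the two-phase implementation sIMP. -/
structure SImpState where
  pc : ℕ
  reg : ℕ
  st : ℕ
  res : ℕ
  ret : ℕ

/-- Step of the architecture sISA. -/
def sISAStep (m : ℕ → ℕ) (s : ℕ × ℕ) : ℕ × ℕ := (s.1 + 1, s.2 + m s.1)

/-- Step of the implementation sIMP. -/
def sIMPStep (m : ℕ → ℕ) (s : SImpState) : SImpState :=
  if s.st = 0 then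
    if m s.pc = 0 then ⟨s.pc + 1, s.reg, 0, s.res, 1⟩
    else ⟨s.pc, s.reg, 1, m s.pc + s.reg, 0⟩
  else ⟨s.pc + 1, s.res, 0, s.res, 1⟩

namespace SImpState

def arch (s : SImpState) : ℕ × ℕ := (s.pc, s.reg)

def Retired (s : SImpState) : Prop := s.st = 0 ∧ s.ret = 1

end SImpState

open SImpState

def latency (m : ℕ → ℕ) (pc : ℕ) : ℕ := if m pc = 0 then 1 else 2

def retireTime (m : ℕ → ℕ) (a : ℕ × ℕ) : ℕ → ℕ
  | 0 => 0
  | k + 1 => retireTime m a k + latency m ((sISAStep m)^[k] a).1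

section Run

variable (m : ℕ → ℕ) {s₀ : SImpState}

theorem arch_sIMPStep_of_ret_eq_zero {s : SImpState} (h : (sIMPStep m s).ret = 0) :
    (sIMPStep m s).arch = s.arch := by
  unfold sIMPStep at h ⊢
  split_ifs at h ⊢
  rfl

theorem ret_sIMPStep_of_ne_zero {s : SImpState} (hs : s.st = 0) (h : m s.pc ≠ 0) :
    (sIMPStep m s).ret = 0 := by
  simp [sIMPStep, hs, h]

theorem iterate_latency_retired {s : SImpState} (hs : s.st = 0) :
    ((sIMPStep m)^[latency m s.pc] s).Retired ∧
      ((sIMPStep m)^[latency m s.pc] s).arch = sISAStep m s.arch := by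
  by_cases h : m s.pc = 0 <;>
    simp [latency, sIMPStep, sISAStep, Retired, arch, hs, h, Nat.add_comm]

theorem retired_iterate_retireTime (h₀ : s₀.Retired) (k : ℕ) :
    ((sIMPStep m)^[retireTime m s₀.arch k] s₀).Retired ∧
      ((sIMPStep m)^[retireTime m s₀.arch k] s₀).arch = (sISAStep m)^[k] s₀.arch := by
  induction k with
  | zero => exact ⟨h₀, rfl⟩
  | succ k ih =>
    obtain ⟨hret, harch⟩ := ih
    rw [retireTime, ← harch, Nat.add_comm, Function.iterate_add_apply,
      Function.iterate_succ_apply', ← harch]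
    exact iterate_latency_retired m hret.1

open Classical in
theorem count_ret_retireTime (h₀ : s₀.Retired) (k : ℕ) :
    Nat.count (fun n => ((sIMPStep m)^[n] s₀).ret = 1) (retireTime m s₀.arch k) = k := by
  induction k with
  | zero => rfl
  | succ k ih =>
    obtain ⟨⟨hst, hret⟩, harch⟩ := retired_iterate_retireTime m h₀ k
    rw [retireTime, ← harch, latency]
    split_ifs with h
    · rw [Nat.count_succ, if_pos hret, ih]
    · have hstall : ((sIMPStep m)^[retireTime m s₀.arch k + 1] s₀).ret ≠ 1 := by
        rw [Function.iterate_succ_apply', ret_sIMPStep_of_ne_zero m hst h]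
        decide
      rw [Nat.count_succ, Nat.count_succ, if_pos hret, if_neg hstall, ih]

theorem nth_ret_eq_retireTime (h₀ : s₀.Retired) (k : ℕ) :
    Nat.nth (fun n => ((sIMPStep m)^[n] s₀).ret = 1) k = retireTime m s₀.arch k := by
  classical
  conv_lhs => rw [← count_ret_retireTime m h₀ k]
  exact Nat.nth_count (retired_iterate_retireTime m h₀ k).1.2

end Run

/-- sIMP correctly implements sISA with retirement predicate `ret = 1`:
the subsequence of `(pc, reg)` values of sIMP's run at steps where `ret = 1`
equals sISA's run, and `(pc, reg)` is unchanged at any step where `ret = 0`. -/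
theorem stmt18 (m : ℕ → ℕ) :
    (∀ k : ℕ,
      ((sIMPStep m)^[Nat.nth
          (fun n => ((sIMPStep m)^[n] ⟨0, 0, 0, 0, 1⟩).ret = 1) k]
          (⟨0, 0, 0, 0, 1⟩ : SImpState)).pc = ((sISAStep m)^[k] (0, 0)).1 ∧
      ((sIMPStep m)^[Nat.nth
          (fun n => ((sIMPStep m)^[n] ⟨0, 0, 0, 0, 1⟩).ret = 1) k]
          (⟨0, 0, 0, 0, 1⟩ : SImpState)).reg = ((sISAStep m)^[k] (0, 0)).2) ∧
    (∀ n : ℕ,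
      ((sIMPStep m)^[n + 1] (⟨0, 0, 0, 0, 1⟩ : SImpState)).ret = 0 →
      ((sIMPStep m)^[n + 1] (⟨0, 0, 0, 0, 1⟩ : SImpState)).pc =
        ((sIMPStep m)^[n] (⟨0, 0, 0, 0, 1⟩ : SImpState)).pc ∧
      ((sIMPStep m)^[n + 1] (⟨0, 0, 0, 0, 1⟩ : SImpState)).reg =
        ((sIMPStep m)^[n] (⟨0, 0, 0, 0, 1⟩ : SImpState)).reg) := by
  have h₀ : (⟨0, 0, 0, 0, 1⟩ : SImpState).Retired := ⟨rfl, rfl⟩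
  refine ⟨fun k => ?_, fun n hn => ?_⟩
  · rw [nth_ret_eq_retireTime m h₀ k]
    exact Prod.ext_iff.mp (retired_iterate_retireTime m h₀ k).2
  · rw [Function.iterate_succ_apply'] at hn ⊢
    exact Prod.ext_iff.mp (arch_sIMPStep_of_ret_eq_zero m hn)
end
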